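/- arXiv:1506.09182 — 2 statements merged into one kernel-verified Lean document; each statement's English description precedes it below -/
import Mathlib

section
/- For double linear diagrams G_1, G_2 with marked (ordered) lines, the connected sum G_1 # G_2, formed by gluing the first line of G_1 to the first line of G_2 and the second line of G_1 to the second line of G_2 respecting orientations, satisfies β_{G_1 # G_2} = β_{G_1} + β_{G_2} − c, where c ∈ {1, 2} depends only on G_1 and G_2 (specifically on how the four non-compact components of N(G_1) and N(G_2) connect the line ends) and not on the choice of gluing points. -/
open FreeAbelianGroup

/-! ## Basic cyclic/linear combinatorics -/

/-- Cyclic successor on `Fin m`. -/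
def cyc {m : ℕ} (p : Fin m) : Fin m :=
  ⟨(p.1 + 1) % m, by have := p.2; exact Nat.mod_lt _ (by omega)⟩

/-- Linear successor on `Fin m` (fixing the last point). -/
def lsuc {m : ℕ} (p : Fin m) : Fin m :=
  if h : p.1 + 1 < m then ⟨p.1 + 1, h⟩ else p

/-- Rotation by `r` on `Fin m`. -/
def rotF {m : ℕ} (r : ℕ) (p : Fin m) : Fin m :=
  ⟨(p.1 + r) % m, by have := p.2; exact Nat.mod_lt _ (by omega)⟩

/-- The point relocation map: removes the point at position `s` and re-inserts it
at position `t`, shifting the intermediate points; it sends old positions to new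
positions. -/
def reloc {m : ℕ} (s t : Fin m) (i : Fin m) : Fin m :=
  if s.1 ≤ t.1 then
    (if i = s then t else if h : s.1 < i.1 ∧ i.1 ≤ t.1 then ⟨i.1 - 1, by have := i.2; omega⟩ else i)
  else
    (if i = s then t else if h : t.1 ≤ i.1 ∧ i.1 < s.1 then ⟨i.1 + 1, by have := s.2; omega⟩ else i)

/-- The "other end" of the chord passing through `p`, for a chord-labelling
function `c` in which every chord label occurs exactly twice. -/
noncomputable def otherPt {α : Type} [Fintype α] [DecidableEq α] {n : ℕ}
    (c : α → Fin n) (p : α) : α :=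
  if h : (Finset.univ.filter fun q => c q = c p ∧ q ≠ p).Nonempty then h.choose else p

/-- Number of orbits of the equivalence relation generated by `r`. -/
noncomputable def orbitCount {α : Type} (r : α → α → Prop) : ℕ :=
  Nat.card (Quotient (Relation.EqvGen.setoid r))

/-! ## Chord diagrams on one circle -/

/-- A chord diagram with `n` chords: `2n` points on an oriented circle labelled by
chords, each chord having exactly two endpoints. -/
structure CD (n : ℕ) where
  c : Fin (2 * n) → Fin n
  two : ∀ j, Fintype.card {p // c p = j} = 2

/-- A framed chord diagram: a chord diagram with a framing in `ℤ/2ℤ` on each chord. -/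
structure FCD (n : ℕ) where
  c : Fin (2 * n) → Fin n
  fr : Fin n → ZMod 2
  two : ∀ j, Fintype.card {p // c p = j} = 2

/-- The number of connected components of the one-manifold obtained by surgery
along all chords of a chord diagram: traversing the surgered curve, the strand
arriving at a point `p` continues from the point right after the other end of the
chord at `p`. -/
noncomputable def betaCD {n : ℕ} (D : CD n) : ℕ :=
  orbitCount (fun p q => cyc (otherPt D.c p) = q)

/-- Chords `j` and `k` appear in alternating (interleaved) position, with an
endpoint of `j` first. -/
def AltOrd {n : ℕ} (c : Fin (2 * n) → Fin n) (j k : Fin n) : Prop :=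
  ∃ p₁ q₁ p₂ q₂ : Fin (2 * n), c p₁ = j ∧ c p₂ = j ∧ c q₁ = k ∧ c q₂ = k ∧
    p₁ < q₁ ∧ q₁ < p₂ ∧ p₂ < q₂

/-- Two chords are interleaved (linked) if their endpoints alternate around the circle. -/
def Interleaved {n : ℕ} (c : Fin (2 * n) → Fin n) (j k : Fin n) : Prop :=
  AltOrd c j k ∨ AltOrd c k j

open Classical in
/-- The interlacement (intersection) matrix over `GF(2)`. -/
noncomputable def interMatrix {n : ℕ} (c : Fin (2 * n) → Fin n) :
    Matrix (Fin n) (Fin n) (ZMod 2) :=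
  fun j k => if j ≠ k ∧ Interleaved c j k then 1 else 0

/-- `β` of a framed chord diagram, defined as `corank (A(D) + F(D)) + 1` over `GF(2)`. -/
noncomputable def betaFCD {n : ℕ} (D : FCD n) : ℕ :=
  (n - (interMatrix D.c + Matrix.diagonal D.fr).rank) + 1

/-- The 2T-relation for chord diagrams: chords `a` and `b`, appearing in
non-interleaved position `a b … b a`, have their endpoints commuted at both
adjacent pairs simultaneously. -/
def TwoTCD {n : ℕ} (D D' : CD n) : Prop :=
  ∃ (p q : Fin (2 * n)) (a b : Fin n), a ≠ b ∧
    p ≠ q ∧ cyc p ≠ q ∧ p ≠ cyc q ∧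
    ¬ Interleaved D.c a b ∧
    D.c p = a ∧ D.c (cyc p) = b ∧ D.c q = b ∧ D.c (cyc q) = a ∧
    D'.c p = b ∧ D'.c (cyc p) = a ∧ D'.c q = a ∧ D'.c (cyc q) = b ∧
    (∀ r, r ≠ p → r ≠ cyc p → r ≠ q → r ≠ cyc q → D'.c r = D.c r)

/-- The framed 2T-relation: as `TwoTCD`, with framings preserved. -/
def TwoTFCD {n : ℕ} (D D' : FCD n) : Prop :=
  ∃ (p q : Fin (2 * n)) (a b : Fin n), a ≠ b ∧
    p ≠ q ∧ cyc p ≠ q ∧ p ≠ cyc q ∧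
    ¬ Interleaved D.c a b ∧
    D.c p = a ∧ D.c (cyc p) = b ∧ D.c q = b ∧ D.c (cyc q) = a ∧
    D'.c p = b ∧ D'.c (cyc p) = a ∧ D'.c q = a ∧ D'.c (cyc q) = b ∧
    (∀ r, r ≠ p → r ≠ cyc p → r ≠ q → r ≠ cyc q → D'.c r = D.c r) ∧
    D'.fr = D.fr

/-- Isomorphism of chord diagrams: a rotation of the core circle together with a
relabelling of the chords. -/
def IsoCD {n : ℕ} (D D' : CD n) : Prop :=
  ∃ (π : Equiv.Perm (Fin n)) (r : ℕ), ∀ p, D'.c p = π (D.c (rotF r p))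

/-- Isomorphism of framed chord diagrams. -/
def IsoFCD {n : ℕ} (D D' : FCD n) : Prop :=
  ∃ (π : Equiv.Perm (Fin n)) (r : ℕ),
    (∀ p, D'.c p = π (D.c (rotF r p))) ∧ (∀ j, D'.fr (π j) = D.fr j)

/-- The 4T-relation quadruple for chord diagrams, with active chords `a`, `b`:
`D₂` is obtained from `D₁` by sliding the endpoint `x = cyc y₁` of `b` past the
endpoint `y₁` of `a`, and `D₄` is obtained from `D₃` by the same slide past the
other endpoint `y₂` of `a`, where `D₃` is `D₁` with `x` relocated next to `y₂`. -/
def FourTQuadCD {n : ℕ} (D₁ D₂ D₃ D₄ : CD n) (a b : Fin n) : Prop :=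
  ∃ (y₁ y₂ t : Fin (2 * n)), a ≠ b ∧
    D₁.c y₁ = a ∧ D₁.c y₂ = a ∧ D₁.c (cyc y₁) = b ∧ y₂ ≠ y₁ ∧ y₂ ≠ cyc y₁ ∧
    (D₂.c y₁ = b ∧ D₂.c (cyc y₁) = a ∧
      ∀ r, r ≠ y₁ → r ≠ cyc y₁ → D₂.c r = D₁.c r) ∧
    (D₃.c ∘ reloc (cyc y₁) t = D₁.c) ∧
    t = cyc (reloc (cyc y₁) t y₂) ∧
    (D₄.c (reloc (cyc y₁) t y₂) = D₃.c t ∧ D₄.c t = D₃.c (reloc (cyc y₁) t y₂) ∧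
      ∀ r, r ≠ reloc (cyc y₁) t y₂ → r ≠ t → D₄.c r = D₃.c r)

/-- The framed 4T-relation quadruple (all framing combinations allowed, framings preserved). -/
def FourTQuadFCD {n : ℕ} (D₁ D₂ D₃ D₄ : FCD n) (a b : Fin n) : Prop :=
  ∃ (y₁ y₂ t : Fin (2 * n)), a ≠ b ∧
    D₁.c y₁ = a ∧ D₁.c y₂ = a ∧ D₁.c (cyc y₁) = b ∧ y₂ ≠ y₁ ∧ y₂ ≠ cyc y₁ ∧
    (D₂.c y₁ = b ∧ D₂.c (cyc y₁) = a ∧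
      ∀ r, r ≠ y₁ → r ≠ cyc y₁ → D₂.c r = D₁.c r) ∧
    (D₃.c ∘ reloc (cyc y₁) t = D₁.c) ∧
    t = cyc (reloc (cyc y₁) t y₂) ∧
    (D₄.c (reloc (cyc y₁) t y₂) = D₃.c t ∧ D₄.c t = D₃.c (reloc (cyc y₁) t y₂) ∧
      ∀ r, r ≠ reloc (cyc y₁) t y₂ → r ≠ t → D₄.c r = D₃.c r) ∧
    D₂.fr = D₁.fr ∧ D₃.fr = D₁.fr ∧ D₄.fr = D₁.fr

/-- Chord diagrams of all sizes. -/
def CDAll : Type := Σ n : ℕ, CD n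

/-- Framed chord diagrams of all sizes. -/
def FCDAll : Type := Σ n : ℕ, FCD n

/-- Relators for the module `M` of chord diagrams: isomorphism relators and
4T-relators. -/
def cdRelators : Set (FreeAbelianGroup CDAll) :=
  {x | (∃ (n : ℕ) (D D' : CD n), IsoCD D D' ∧ x = of ⟨n, D⟩ - of ⟨n, D'⟩) ∨
    (∃ (n : ℕ) (D₁ D₂ D₃ D₄ : CD n) (a b : Fin n), FourTQuadCD D₁ D₂ D₃ D₄ a b ∧
      x = of ⟨n, D₁⟩ - of ⟨n, D₂⟩ - of ⟨n, D₃⟩ + of ⟨n, D₄⟩)}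

/-- Relators for the module `M^f` of framed chord diagrams. -/
def fcdRelators : Set (FreeAbelianGroup FCDAll) :=
  {x | (∃ (n : ℕ) (D D' : FCD n), IsoFCD D D' ∧ x = of ⟨n, D⟩ - of ⟨n, D'⟩) ∨
    (∃ (n : ℕ) (D₁ D₂ D₃ D₄ : FCD n) (a b : Fin n), FourTQuadFCD D₁ D₂ D₃ D₄ a b ∧
      x = of ⟨n, D₁⟩ - of ⟨n, D₂⟩ - of ⟨n, D₃⟩ + of ⟨n, D₄⟩)}

/-- The module `M` of chord diagrams modulo 4T-relations. -/
abbrev ModM : Type := FreeAbelianGroup CDAll ⧸ AddSubgroup.closure cdRelators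

/-- The module `M^f` of framed chord diagrams modulo framed 4T-relations. -/
abbrev ModMf : Type := FreeAbelianGroup FCDAll ⧸ AddSubgroup.closure fcdRelators

noncomputable def mkM : FreeAbelianGroup CDAll →+ ModM :=
  QuotientAddGroup.mk' _

noncomputable def mkMf : FreeAbelianGroup FCDAll →+ ModMf :=
  QuotientAddGroup.mk' _

/-- `C` is a connected sum of `A` and `B`: for some choice of cut points
(rotations `r₁`, `r₂`), the chords of `A` occupy one arc of `C` and the chords of
`B` the complementary arc, in the same cyclic orders. -/
def IsConnSumCD {n₁ n₂ : ℕ} (A : CD n₁) (B : CD n₂) (C : CD (n₁ + n₂)) : Prop :=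
  ∃ r₁ r₂ : ℕ,
    (∀ (i : Fin (2 * (n₁ + n₂))) (hi : i.1 < 2 * n₁),
      C.c i = Fin.castAdd n₂ (A.c ⟨(i.1 + r₁) % (2 * n₁), Nat.mod_lt _ (by omega)⟩)) ∧
    (∀ (i : Fin (2 * (n₁ + n₂))) (hi : 2 * n₁ ≤ i.1),
      C.c i = Fin.natAdd n₁ (B.c ⟨(i.1 - 2 * n₁ + r₂) % (2 * n₂),
        Nat.mod_lt _ (by have := i.2; omega)⟩))

/-- `C` is a connected sum of the framed chord diagrams `A` and `B`. -/
def IsConnSumFCD {n₁ n₂ : ℕ} (A : FCD n₁) (B : FCD n₂) (C : FCD (n₁ + n₂)) : Prop :=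
  (∃ r₁ r₂ : ℕ,
    (∀ (i : Fin (2 * (n₁ + n₂))) (hi : i.1 < 2 * n₁),
      C.c i = Fin.castAdd n₂ (A.c ⟨(i.1 + r₁) % (2 * n₁), Nat.mod_lt _ (by omega)⟩)) ∧
    (∀ (i : Fin (2 * (n₁ + n₂))) (hi : 2 * n₁ ≤ i.1),
      C.c i = Fin.natAdd n₁ (B.c ⟨(i.1 - 2 * n₁ + r₂) % (2 * n₂),
        Nat.mod_lt _ (by have := i.2; omega)⟩))) ∧
    (∀ j, C.fr (Fin.castAdd n₂ j) = A.fr j) ∧ (∀ j, C.fr (Fin.natAdd n₁ j) = B.fr j)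
/-! ## Double chord diagrams (chord diagrams on two circles) -/

/-- A double chord diagram with `n` chords and `m₁`, `m₂` marked points on the two
oriented core circles. -/
structure DCD (n m₁ m₂ : ℕ) where
  c : Fin m₁ ⊕ Fin m₂ → Fin n
  two : ∀ j, Fintype.card {p // c p = j} = 2

/-- Simultaneous cyclic successor on the points of the two circles. -/
def cycS {m₁ m₂ : ℕ} : Fin m₁ ⊕ Fin m₂ → Fin m₁ ⊕ Fin m₂ := Sum.map cyc cyc

/-- The number of connected components of the one-manifold obtained by surgery
along all chords of a double chord diagram (a core circle without chord endpoints
contributes one component). -/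
noncomputable def betaDCD {n m₁ m₂ : ℕ} (G : DCD n m₁ m₂) : ℕ :=
  orbitCount (fun p q => cycS (otherPt G.c p) = q) +
    (if m₁ = 0 then 1 else 0) + (if m₂ = 0 then 1 else 0)

/-- The 2T-relation for double chord diagrams: the endpoints of two chords `a`,
`b`, occurring in two adjacent pairs `a b` and `b a`, are commuted at both pairs
simultaneously. -/
def TwoTDCD {n m₁ m₂ : ℕ} (G G' : DCD n m₁ m₂) : Prop :=
  ∃ (p q : Fin m₁ ⊕ Fin m₂) (a b : Fin n), a ≠ b ∧
    p ≠ q ∧ cycS p ≠ q ∧ p ≠ cycS q ∧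
    G.c p = a ∧ G.c (cycS p) = b ∧ G.c q = b ∧ G.c (cycS q) = a ∧
    G'.c p = b ∧ G'.c (cycS p) = a ∧ G'.c q = a ∧ G'.c (cycS q) = b ∧
    (∀ r, r ≠ p → r ≠ cycS p → r ≠ q → r ≠ cycS q → G'.c r = G.c r)

/-- Isomorphism of double chord diagrams: rotations of the two core circles
together with a relabelling of the chords. -/
def IsoDCD {n m₁ m₂ : ℕ} (G G' : DCD n m₁ m₂) : Prop :=
  ∃ (π : Equiv.Perm (Fin n)) (r₁ r₂ : ℕ),
    ∀ p, G'.c p = π (G.c (Sum.map (rotF r₁) (rotF r₂) p))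

/-- Double chord diagrams of all sizes. -/
def DCDAll : Type := Σ (n m₁ m₂ : ℕ), DCD n m₁ m₂

/-- Relators for the module `M₂` of double chord diagrams: isomorphism relators
and 4T-relators, each 4T-relator being a difference of two 2T-differences. -/
def dcdRelators : Set (FreeAbelianGroup DCDAll) :=
  {x | (∃ (n m₁ m₂ : ℕ) (G G' : DCD n m₁ m₂), IsoDCD G G' ∧
          x = of ⟨n, m₁, m₂, G⟩ - of ⟨n, m₁, m₂, G'⟩) ∨
    (∃ (n m₁ m₂ : ℕ) (G₁ G₂ G₃ G₄ : DCD n m₁ m₂),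
      TwoTDCD G₁ G₂ ∧ TwoTDCD G₃ G₄ ∧
      x = of ⟨n, m₁, m₂, G₁⟩ - of ⟨n, m₁, m₂, G₂⟩ - of ⟨n, m₁, m₂, G₃⟩ + of ⟨n, m₁, m₂, G₄⟩)}

/-- The module `M₂` of double chord diagrams modulo 4T-relations. -/
abbrev ModM2 : Type := FreeAbelianGroup DCDAll ⧸ AddSubgroup.closure dcdRelators

noncomputable def mkM2 : FreeAbelianGroup DCDAll →+ ModM2 :=
  QuotientAddGroup.mk' _

/-- The weight system `w` on linear combinations of double chord diagrams, given
by the number of connected components of the surgery one-manifold. -/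
noncomputable def wDCD : FreeAbelianGroup DCDAll →+ ℤ :=
  FreeAbelianGroup.lift fun G => (betaDCD G.2.2.2 : ℤ)

/-! ## The parity map ψ -/

section Psi

variable {n : ℕ} (D : FCD n) (ε : Fin n → Bool)

/-- The side on which the endpoint `p` is placed, for the choice `ε`: a chord of
framing `0` has both endpoints on the circle chosen by `ε`, a chord of framing `1`
has its endpoints on the two different circles. -/
noncomputable def psiSide (p : Fin (2 * n)) : Bool :=
  if D.fr (D.c p) = 0 then ε (D.c p)
  else xor (ε (D.c p)) (decide (otherPt D.c p < p))

/-- The points placed on the first circle. -/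
noncomputable def psiS1 : Finset (Fin (2 * n)) :=
  Finset.univ.filter fun p => psiSide D ε p = false

/-- The points placed on the second circle. -/
noncomputable def psiS2 : Finset (Fin (2 * n)) :=
  Finset.univ.filter fun p => ¬ psiSide D ε p = false

noncomputable def psiM1 : ℕ := (psiS1 D ε).card
noncomputable def psiM2 : ℕ := (psiS2 D ε).card

/-- Identification of the points of the summand of `ψ` with the points of `D`:
the first circle keeps the order of the core circle of `D`, the second circle
carries the reversed orientation. -/
noncomputable def psiEquiv : (Fin (psiM1 D ε) ⊕ Fin (psiM2 D ε)) ≃ Fin (2 * n) :=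
  (Equiv.sumCongr
    (((psiS1 D ε).orderIsoOfFin rfl).toEquiv.trans
      (Equiv.subtypeEquivRight fun x => by simp [psiS1]))
    ((Fin.revPerm.trans ((psiS2 D ε).orderIsoOfFin rfl).toEquiv).trans
      (Equiv.subtypeEquivRight fun x => by simp [psiS2]))).trans
    (Equiv.sumCompl fun x => psiSide D ε x = false)

/-- The summand of `ψ(D)` corresponding to the choice `ε`. -/
noncomputable def psiSummand : DCD n (psiM1 D ε) (psiM2 D ε) where
  c := D.c ∘ psiEquiv D ε
  two := fun j =>
    (Fintype.card_congr ((psiEquiv D ε).subtypeEquiv fun _ => Iff.rfl)).trans (D.two j)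

/-- The summand of `ψ(D)` as an element of `DCDAll`. -/
noncomputable def psiSummandAll : DCDAll :=
  ⟨n, psiM1 D ε, psiM2 D ε, psiSummand D ε⟩

/-- The parity map `ψ` on a framed chord diagram: the sum of the `2^n` double
chord diagrams obtained by distributing the chords over the two circles. -/
noncomputable def psi : FreeAbelianGroup DCDAll :=
  ∑ ε : Fin n → Bool, of (psiSummandAll D ε)

end Psi
/-! ## Framed linear diagrams -/

/-- A framed linear diagram: `2n` points on an oriented line, paired into `n`
arcs, each arc carrying a framing in `ℤ/2ℤ`. -/
structure FLD (n : ℕ) where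
  c : Fin (2 * n) → Fin n
  fr : Fin n → ZMod 2
  two : ∀ j, Fintype.card {p // c p = j} = 2

/-- The closure of a framed linear diagram: joining the two ends of the line
into an oriented circle. -/
def Cl {n : ℕ} (G : FLD n) : FCD n := ⟨G.c, G.fr, G.two⟩

/-- Isomorphism of framed linear diagrams (relabelling of arcs). -/
def IsoFLD {n : ℕ} (D D' : FLD n) : Prop :=
  ∃ π : Equiv.Perm (Fin n),
    (∀ p, D'.c p = π (D.c p)) ∧ (∀ j, D'.fr (π j) = D.fr j)

/-- The linear 4T-relation quadruple for framed linear diagrams (as the circular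
one, with linear adjacency). -/
def FourTQuadFLD {n : ℕ} (D₁ D₂ D₃ D₄ : FLD n) (a b : Fin n) : Prop :=
  ∃ (y₁ y₂ t : Fin (2 * n)), a ≠ b ∧
    y₁.1 + 1 < 2 * n ∧ (reloc (lsuc y₁) t y₂).1 + 1 < 2 * n ∧
    D₁.c y₁ = a ∧ D₁.c y₂ = a ∧ D₁.c (lsuc y₁) = b ∧ y₂ ≠ y₁ ∧ y₂ ≠ lsuc y₁ ∧
    (D₂.c y₁ = b ∧ D₂.c (lsuc y₁) = a ∧
      ∀ r, r ≠ y₁ → r ≠ lsuc y₁ → D₂.c r = D₁.c r) ∧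
    (D₃.c ∘ reloc (lsuc y₁) t = D₁.c) ∧
    t = lsuc (reloc (lsuc y₁) t y₂) ∧
    (D₄.c (reloc (lsuc y₁) t y₂) = D₃.c t ∧ D₄.c t = D₃.c (reloc (lsuc y₁) t y₂) ∧
      ∀ r, r ≠ reloc (lsuc y₁) t y₂ → r ≠ t → D₄.c r = D₃.c r) ∧
    D₂.fr = D₁.fr ∧ D₃.fr = D₁.fr ∧ D₄.fr = D₁.fr

/-- Framed linear diagrams of all sizes. -/
def FLDAll : Type := Σ n : ℕ, FLD n

/-- Relators for the module `L^f` of framed linear diagrams. -/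
def fldRelators : Set (FreeAbelianGroup FLDAll) :=
  {x | (∃ (n : ℕ) (D D' : FLD n), IsoFLD D D' ∧ x = of ⟨n, D⟩ - of ⟨n, D'⟩) ∨
    (∃ (n : ℕ) (D₁ D₂ D₃ D₄ : FLD n) (a b : Fin n), FourTQuadFLD D₁ D₂ D₃ D₄ a b ∧
      x = of ⟨n, D₁⟩ - of ⟨n, D₂⟩ - of ⟨n, D₃⟩ + of ⟨n, D₄⟩)}

/-- The module `L^f` of framed linear diagrams modulo linear 4T-relations. -/
abbrev ModLf : Type := FreeAbelianGroup FLDAll ⧸ AddSubgroup.closure fldRelators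

noncomputable def mkLf : FreeAbelianGroup FLDAll →+ ModLf :=
  QuotientAddGroup.mk' _

/-! ## Double linear diagrams -/

/-- A double linear diagram with `n` arcs and `m₁`, `m₂` marked points on the two
oriented lines. -/
structure DLD (n m₁ m₂ : ℕ) where
  c : Fin m₁ ⊕ Fin m₂ → Fin n
  two : ∀ j, Fintype.card {p // c p = j} = 2

/-- The segment of the lines lying immediately before the point `p` (the lines with
`mᵢ` marked points consist of `mᵢ + 1` segments). -/
def segBefore {m₁ m₂ : ℕ} : Fin m₁ ⊕ Fin m₂ → Fin (m₁ + 1) ⊕ Fin (m₂ + 1) :=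
  Sum.map Fin.castSucc Fin.castSucc

/-- The segment of the lines lying immediately after the point `p`. -/
def segAfter {m₁ m₂ : ℕ} : Fin m₁ ⊕ Fin m₂ → Fin (m₁ + 1) ⊕ Fin (m₂ + 1) :=
  Sum.map Fin.succ Fin.succ

/-- The number of connected components of the one-manifold obtained by surgery
along all arcs of a double linear diagram: the strand arriving at a point `p`
continues on the segment following the other end of the arc at `p`. -/
noncomputable def betaDLD {n m₁ m₂ : ℕ} (G : DLD n m₁ m₂) : ℕ :=
  orbitCount (fun s t : Fin (m₁ + 1) ⊕ Fin (m₂ + 1) =>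
    ∃ p, s = segBefore p ∧ t = segAfter (otherPt G.c p))

/-- Simultaneous linear successor on the points of the two lines. -/
def lsucS {m₁ m₂ : ℕ} : Fin m₁ ⊕ Fin m₂ → Fin m₁ ⊕ Fin m₂ := Sum.map lsuc lsuc

/-- The linear 2T-relation for double linear diagrams. -/
def TwoTDLD {n m₁ m₂ : ℕ} (G G' : DLD n m₁ m₂) : Prop :=
  ∃ (p q : Fin m₁ ⊕ Fin m₂) (a b : Fin n), a ≠ b ∧
    lsucS p ≠ p ∧ lsucS q ≠ q ∧
    p ≠ q ∧ lsucS p ≠ q ∧ p ≠ lsucS q ∧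
    G.c p = a ∧ G.c (lsucS p) = b ∧ G.c q = b ∧ G.c (lsucS q) = a ∧
    G'.c p = b ∧ G'.c (lsucS p) = a ∧ G'.c q = a ∧ G'.c (lsucS q) = b ∧
    (∀ r, r ≠ p → r ≠ lsucS p → r ≠ q → r ≠ lsucS q → G'.c r = G.c r)

/-- Isomorphism of double linear diagrams (relabelling of arcs). -/
def IsoDLD {n m₁ m₂ : ℕ} (G G' : DLD n m₁ m₂) : Prop :=
  ∃ π : Equiv.Perm (Fin n), ∀ p, G'.c p = π (G.c p)

/-- Double linear diagrams of all sizes. -/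
def DLDAll : Type := Σ (n m₁ m₂ : ℕ), DLD n m₁ m₂

/-- Relators for the module `L₂` of double linear diagrams. -/
def dldRelators : Set (FreeAbelianGroup DLDAll) :=
  {x | (∃ (n m₁ m₂ : ℕ) (G G' : DLD n m₁ m₂), IsoDLD G G' ∧
          x = of ⟨n, m₁, m₂, G⟩ - of ⟨n, m₁, m₂, G'⟩) ∨
    (∃ (n m₁ m₂ : ℕ) (G₁ G₂ G₃ G₄ : DLD n m₁ m₂),
      TwoTDLD G₁ G₂ ∧ TwoTDLD G₃ G₄ ∧
      x = of ⟨n, m₁, m₂, G₁⟩ - of ⟨n, m₁, m₂, G₂⟩ - of ⟨n, m₁, m₂, G₃⟩ + of ⟨n, m₁, m₂, G₄⟩)}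

/-- The module `L₂` of double linear diagrams modulo linear 4T-relations. -/
abbrev ModL2 : Type := FreeAbelianGroup DLDAll ⧸ AddSubgroup.closure dldRelators

noncomputable def mkL2 : FreeAbelianGroup DLDAll →+ ModL2 :=
  QuotientAddGroup.mk' _

/-- The weight system `w_l` on linear combinations of double linear diagrams. -/
noncomputable def wDLD : FreeAbelianGroup DLDAll →+ ℤ :=
  FreeAbelianGroup.lift fun G => (betaDLD G.2.2.2 : ℤ)

/-! ## The parity map ψₗ for linear diagrams -/

section PsiL

variable {n : ℕ} (D : FLD n) (ε : Fin n → Bool)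

/-- The side on which the endpoint `p` is placed, for the choice `ε`. -/
noncomputable def psiLSide (p : Fin (2 * n)) : Bool :=
  if D.fr (D.c p) = 0 then ε (D.c p)
  else xor (ε (D.c p)) (decide (otherPt D.c p < p))

noncomputable def psiLS1 : Finset (Fin (2 * n)) :=
  Finset.univ.filter fun p => psiLSide D ε p = false

noncomputable def psiLS2 : Finset (Fin (2 * n)) :=
  Finset.univ.filter fun p => ¬ psiLSide D ε p = false

noncomputable def psiLM1 : ℕ := (psiLS1 D ε).card
noncomputable def psiLM2 : ℕ := (psiLS2 D ε).card

/-- Identification of the points of the summand of `ψₗ` with the points of `D`;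
the second line carries the reversed orientation. -/
noncomputable def psiLEquiv : (Fin (psiLM1 D ε) ⊕ Fin (psiLM2 D ε)) ≃ Fin (2 * n) :=
  (Equiv.sumCongr
    (((psiLS1 D ε).orderIsoOfFin rfl).toEquiv.trans
      (Equiv.subtypeEquivRight fun x => by simp [psiLS1]))
    ((Fin.revPerm.trans ((psiLS2 D ε).orderIsoOfFin rfl).toEquiv).trans
      (Equiv.subtypeEquivRight fun x => by simp [psiLS2]))).trans
    (Equiv.sumCompl fun x => psiLSide D ε x = false)

/-- The summand of `ψₗ(D)` corresponding to the choice `ε`. -/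
noncomputable def psiLSummand : DLD n (psiLM1 D ε) (psiLM2 D ε) where
  c := D.c ∘ psiLEquiv D ε
  two := fun j =>
    (Fintype.card_congr ((psiLEquiv D ε).subtypeEquiv fun _ => Iff.rfl)).trans (D.two j)

/-- The summand of `ψₗ(D)` as an element of `DLDAll`. -/
noncomputable def psiLSummandAll : DLDAll :=
  ⟨n, psiLM1 D ε, psiLM2 D ε, psiLSummand D ε⟩

/-- The parity map `ψₗ` on a framed linear diagram. -/
noncomputable def psiL : FreeAbelianGroup DLDAll :=
  ∑ ε : Fin n → Bool, of (psiLSummandAll D ε)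

end PsiL

/-! ## Concatenation of linear diagrams -/

/-- Identification of the points of `G₁ # G₂` with the points of `G₁` and `G₂`. -/
def concatEquiv (n₁ n₂ : ℕ) : Fin (2 * (n₁ + n₂)) ≃ (Fin (2 * n₁) ⊕ Fin (2 * n₂)) :=
  (finCongr (by ring)).trans finSumFinEquiv.symm

/-- The connected sum (concatenation) `G₁ # G₂` of two framed linear diagrams. -/
def concatFLD {n₁ n₂ : ℕ} (G₁ : FLD n₁) (G₂ : FLD n₂) : FLD (n₁ + n₂) where
  c := Sum.elim (Fin.castAdd n₂ ∘ G₁.c) (Fin.natAdd n₁ ∘ G₂.c) ∘ concatEquiv n₁ n₂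
  fr := Sum.elim G₁.fr G₂.fr ∘ finSumFinEquiv.symm
  two := by
    intro j
    set P : Fin (2 * n₁) ⊕ Fin (2 * n₂) → Fin (n₁ + n₂) :=
      Sum.elim (Fin.castAdd n₂ ∘ G₁.c) (Fin.natAdd n₁ ∘ G₂.c) with hP
    have e1 : Fintype.card {p // (P ∘ concatEquiv n₁ n₂) p = j} =
        Fintype.card {q // P q = j} :=
      Fintype.card_congr ((concatEquiv n₁ n₂).subtypeEquiv fun _ => Iff.rfl)
    have e2 : Fintype.card {q // P q = j} =
        Fintype.card {x : Fin (2 * n₁) // P (Sum.inl x) = j} +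
          Fintype.card {y : Fin (2 * n₂) // P (Sum.inr y) = j} := by
      rw [Fintype.card_congr (Equiv.subtypeSum (p := fun q => P q = j))]
      exact Fintype.card_sum
    show Fintype.card {p // (P ∘ concatEquiv n₁ n₂) p = j} = 2
    rw [e1, e2]
    induction j using Fin.addCases with
    | left j =>
      have h2 : Fintype.card {y : Fin (2 * n₂) // P (Sum.inr y) = Fin.castAdd n₂ j} = 0 := by
        rw [Fintype.card_eq_zero_iff]
        refine ⟨fun ⟨y, hy⟩ => ?_⟩
        have hj := j.2
        simp only [hP, Sum.elim_inr, Function.comp_apply, Fin.ext_iff,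
          Fin.coe_natAdd, Fin.coe_castAdd] at hy
        omega
      have h1 : Fintype.card {x : Fin (2 * n₁) // P (Sum.inl x) = Fin.castAdd n₂ j} = 2 := by
        rw [Fintype.card_congr (Equiv.subtypeEquivRight
          (p := fun x => P (Sum.inl x) = Fin.castAdd n₂ j)
          (q := fun x => G₁.c x = j) fun x => by
          simp only [hP, Sum.elim_inl, Function.comp_apply, Fin.castAdd_inj])]
        exact G₁.two j
      omega
    | right j =>
      have h1 : Fintype.card {x : Fin (2 * n₁) // P (Sum.inl x) = Fin.natAdd n₁ j} = 0 := by
        rw [Fintype.card_eq_zero_iff]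
        refine ⟨fun ⟨x, hx⟩ => ?_⟩
        have hx2 := (G₁.c x).2
        simp only [hP, Sum.elim_inl, Function.comp_apply, Fin.ext_iff,
          Fin.coe_natAdd, Fin.coe_castAdd] at hx
        omega
      have h2 : Fintype.card {y : Fin (2 * n₂) // P (Sum.inr y) = Fin.natAdd n₁ j} = 2 := by
        rw [Fintype.card_congr (Equiv.subtypeEquivRight
          (p := fun y => P (Sum.inr y) = Fin.natAdd n₁ j)
          (q := fun y => G₂.c y = j) fun y => by
          simp only [hP, Sum.elim_inr, Function.comp_apply, Fin.ext_iff,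
            Fin.coe_natAdd]
          omega)]
        exact G₂.two j
      omega

/-- `G` is the marked concatenation (connected sum) of the double linear diagrams
`X` and `Y`: the first (resp. second) line of `X` is glued to the beginning of the
first (resp. second) line of `Y`. -/
def IsConcatDLD {n n' a₁ a₂ b₁ b₂ : ℕ} (X : DLD n a₁ a₂) (Y : DLD n' b₁ b₂)
    (G : DLD (n + n') (a₁ + b₁) (a₂ + b₂)) : Prop :=
  (∀ i : Fin a₁, G.c (Sum.inl (Fin.castAdd b₁ i)) = Fin.castAdd n' (X.c (Sum.inl i))) ∧
  (∀ i : Fin b₁, G.c (Sum.inl (Fin.natAdd a₁ i)) = Fin.natAdd n (Y.c (Sum.inl i))) ∧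
  (∀ i : Fin a₂, G.c (Sum.inr (Fin.castAdd b₂ i)) = Fin.castAdd n' (X.c (Sum.inr i))) ∧
  (∀ i : Fin b₂, G.c (Sum.inr (Fin.natAdd a₂ i)) = Fin.natAdd n (Y.c (Sum.inr i)))

/-- The marked concatenation relation on double linear diagrams of arbitrary sizes. -/
def IsConcatDLDAll (x y z : DLDAll) : Prop :=
  ∃ (n n' a₁ a₂ b₁ b₂ : ℕ) (X : DLD n a₁ a₂) (Y : DLD n' b₁ b₂)
    (G : DLD (n + n') (a₁ + b₁) (a₂ + b₂)),
    x = ⟨n, a₁, a₂, X⟩ ∧ y = ⟨n', b₁, b₂, Y⟩ ∧ z = ⟨n + n', a₁ + b₁, a₂ + b₂, G⟩ ∧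
    IsConcatDLD X Y G
/-! ## Symmetries of double chord diagrams -/

/-- The double chord diagram obtained by simultaneously reversing the
orientations of both core circles. -/
noncomputable def revBoth {n m₁ m₂ : ℕ} (G : DCD n m₁ m₂) : DCD n m₁ m₂ where
  c := G.c ∘ (Equiv.sumCongr (Fin.revPerm (n := m₁)) (Fin.revPerm (n := m₂)))
  two := fun j =>
    (Fintype.card_congr ((Equiv.sumCongr (Fin.revPerm (n := m₁))
      (Fin.revPerm (n := m₂))).subtypeEquiv fun _ => Iff.rfl)).trans (G.two j)

/-- The double chord diagram obtained by exchanging the two core circles. -/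
noncomputable def swapCirc {n m₁ m₂ : ℕ} (G : DCD n m₁ m₂) : DCD n m₂ m₁ where
  c := G.c ∘ (Equiv.sumComm (Fin m₂) (Fin m₁))
  two := fun j =>
    (Fintype.card_congr ((Equiv.sumComm (Fin m₂) (Fin m₁)).subtypeEquiv
      fun _ => Iff.rfl)).trans (G.two j)

/-- Isomorphism of double chord diagrams of arbitrary sizes. -/
def IsoDCDAll (x y : DCDAll) : Prop :=
  ∃ (n m₁ m₂ : ℕ) (G G' : DCD n m₁ m₂),
    x = ⟨n, m₁, m₂, G⟩ ∧ y = ⟨n, m₁, m₂, G'⟩ ∧ IsoDCD G G'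

/-- Exchanging the two circles combined with reversing both orientations. -/
noncomputable def swapRevAll (x : DCDAll) : DCDAll :=
  ⟨x.1, x.2.2.1, x.2.1, swapCirc (revBoth x.2.2.2)⟩

/-- The chord `j` of a double chord diagram joins the two core circles. -/
def JoinsCircles {n m₁ m₂ : ℕ} (G : DCD n m₁ m₂) (j : Fin n) : Prop :=
  ∃ (p : Fin m₁) (q : Fin m₂), G.c (Sum.inl p) = j ∧ G.c (Sum.inr q) = j

/-!
Cutting `G = X # Y` at the two gluing points, the segments of `G` are those of `X` and `Y`, with
the last segment of each line of `X` identified with the first segment of the same line of `Y`,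
and every surgery step of `G` is a step of `X` or of `Y`. So the components of `N(G)` are those of
`N(X) ⊔ N(Y)` joined by two extra edges. The first edge always merges a component of `X` with one
of `Y`. The second merges two more components unless its ends are already connected, which
happens exactly when both line ends of `X` lie on one component and both line starts of `Y` do;
so `c` is `1` in that case and `2` otherwise.
-/

open Relation

section OrbitCount

variable {α β : Type}

theorem eq_of_eqvGen {γ : Sort*} {r : α → α → Prop} {f : α → γ}
    (hf : ∀ x y, r x y → f x = f y) {a b : α} (h : EqvGen r a b) : f a = f b :=
  congrArg (Quot.lift f hf) (Quot.eqvGen_sound h)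

theorem eqvGen_map {r : α → α → Prop} {s : β → β → Prop} {f : α → β}
    (hf : ∀ x y, r x y → EqvGen s (f x) (f y)) {a b : α} (h : EqvGen r a b) :
    EqvGen s (f a) (f b) := by
  induction h with
  | rel x y hxy => exact hf x y hxy
  | refl x => exact .refl _
  | symm x y _ ih => exact .symm _ _ ih
  | trans x y z _ _ ih₁ ih₂ => exact .trans _ _ _ ih₁ ih₂

theorem orbitCount_eq_of_maps {r : α → α → Prop} {s : β → β → Prop} (f : α → β) (g : β → α)
    (hf : ∀ x y, r x y → EqvGen s (f x) (f y)) (hg : ∀ x y, s x y → EqvGen r (g x) (g y))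
    (hgf : ∀ x, EqvGen r (g (f x)) x) (hfg : ∀ y, EqvGen s (f (g y)) y) :
    orbitCount r = orbitCount s :=
  Nat.card_congr
    { toFun := Quotient.map f fun _ _ => eqvGen_map hf
      invFun := Quotient.map g fun _ _ => eqvGen_map hg
      left_inv := Quotient.ind fun x => Quotient.sound (hgf x)
      right_inv := Quotient.ind fun y => Quotient.sound (hfg y) }

theorem orbitCount_eq_natCard : orbitCount (@Eq α) = Nat.card α :=
  Nat.card_congr
    { toFun := Quotient.lift id fun _ _ => eq_of_eqvGen fun _ _ => id
      invFun := Quotient.mk _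
      left_inv := Quotient.ind fun _ => rfl
      right_inv := fun _ => rfl }

theorem orbitCount_sumLiftRel [Finite α] [Finite β] (r : α → α → Prop) (s : β → β → Prop) :
    orbitCount (Sum.LiftRel r s) = orbitCount r + orbitCount s := by
  let Q := Quotient (EqvGen.setoid r) ⊕ Quotient (EqvGen.setoid s)
  have hQ : orbitCount (Sum.LiftRel r s) = orbitCount (@Eq Q) := by
    refine orbitCount_eq_of_maps (Sum.map (Quotient.mk _) (Quotient.mk _))
      (Sum.map Quotient.out Quotient.out) ?_ ?_ ?_ ?_
    · rintro _ _ (⟨h⟩ | ⟨h⟩)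
      · exact .rel _ _ (congrArg Sum.inl (Quotient.sound (.rel _ _ h)))
      · exact .rel _ _ (congrArg Sum.inr (Quotient.sound (.rel _ _ h)))
    · rintro x _ rfl
      exact .refl _
    · rintro (x | x)
      · exact eqvGen_map (fun _ _ h => .rel _ _ (Sum.LiftRel.inl h))
          (Quotient.mk_out (s := EqvGen.setoid r) x)
      · exact eqvGen_map (fun _ _ h => .rel _ _ (Sum.LiftRel.inr h))
          (Quotient.mk_out (s := EqvGen.setoid s) x)
    · rintro (y | y) <;> exact .rel _ _ (by simp)
  rw [hQ, orbitCount_eq_natCard, Nat.card_sum]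
  rfl

theorem not_eqvGen_sumLiftRel_inl_inr {r : α → α → Prop} {s : β → β → Prop} (x : α) (y : β) :
    ¬ EqvGen (Sum.LiftRel r s) (.inl x) (.inr y) := fun h =>
  absurd (eq_of_eqvGen (f := Sum.isLeft)
    (fun _ _ h => Bool.eq_iff_iff.mpr (Sum.LiftRel.isLeft_congr h)) h) (by simp)

def addEdge (r : α → α → Prop) (a b : α) : α → α → Prop :=
  fun x y => r x y ∨ x = a ∧ y = b

theorem orbitCount_addEdge_of_eqvGen {r : α → α → Prop} {a b : α} (h : EqvGen r a b) :
    orbitCount (addEdge r a b) = orbitCount r :=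
  orbitCount_eq_of_maps id id
    (by rintro x y (hxy | ⟨rfl, rfl⟩); exacts [.rel _ _ hxy, h])
    (fun _ _ hxy => .rel _ _ (.inl hxy)) (fun _ => .refl _) (fun _ => .refl _)

open Classical in
theorem orbitCount_addEdge_add_one [Finite α] {r : α → α → Prop} {a b : α}
    (h : ¬ EqvGen r a b) : orbitCount (addEdge r a b) + 1 = orbitCount r := by
  let Q := Quotient (EqvGen.setoid r)
  have hab : (⟦a⟧ : Q) ≠ ⟦b⟧ := fun e => h (Quotient.exact e)
  let F : Q → {q : Q // q ≠ ⟦b⟧} := fun q => if hq : q = ⟦b⟧ then ⟨⟦a⟧, hab⟩ else ⟨q, hq⟩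
  have hF : ∀ q : {q : Q // q ≠ ⟦b⟧}, F q = q := fun q => dif_neg q.2
  have hr : ∀ {x y}, EqvGen r x y → EqvGen (addEdge r a b) x y :=
    fun hxy => EqvGen.mono (fun _ _ => Or.inl) _ _ hxy
  have hcount : orbitCount (addEdge r a b) = Nat.card {q : Q // q ≠ ⟦b⟧} := by
    rw [← orbitCount_eq_natCard]
    refine orbitCount_eq_of_maps (fun x => F ⟦x⟧) (fun q => q.1.out) ?_ ?_ ?_ ?_
    · rintro x y (hxy | ⟨rfl, rfl⟩)
      · exact .rel _ _ (congrArg F (Quotient.sound (.rel _ _ hxy)))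
      · exact .rel _ _ (by simp only [F, dif_neg hab, dif_pos])
    · rintro x _ rfl
      exact .refl _
    · intro x
      by_cases hx : (⟦x⟧ : Q) = ⟦b⟧
      · simp only [F, dif_pos hx]
        exact .trans _ _ _ (hr (Quotient.mk_out (s := EqvGen.setoid r) a))
          (.trans _ _ _ (.rel _ _ (.inr ⟨rfl, rfl⟩)) (hr (Quotient.exact hx.symm)))
      · simp only [F, dif_neg hx]
        exact hr (Quotient.mk_out (s := EqvGen.setoid r) x)
    · intro q
      exact .rel _ _ ((congrArg F (Quotient.out_eq q.1)).trans (hF q))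
  rw [hcount, ← Finite.card_option, Nat.card_congr (Equiv.optionSubtypeNe _)]
  rfl

theorem eqvGen_addEdge_inl_inr_iff {r : α → α → Prop} {s : β → β → Prop} {x₀ x : α}
    {y₀ y : β} :
    EqvGen (addEdge (Sum.LiftRel r s) (.inl x₀) (.inr y₀)) (.inl x) (.inr y) ↔
      EqvGen r x₀ x ∧ EqvGen s y₀ y := by
  set T := addEdge (Sum.LiftRel r s) (.inl x₀) (.inr y₀)
  refine ⟨fun h => ?_, fun ⟨hx, hy⟩ => ?_⟩
  · let φ : α ⊕ β → Prop := Sum.elim (EqvGen r x₀) (EqvGen s y₀)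
    have hφ : ∀ u v, T u v → φ u = φ v := by
      rintro _ _ ((⟨h⟩ | ⟨h⟩) | ⟨rfl, rfl⟩)
      iterate 2
        exact propext ⟨fun hu => .trans _ _ _ hu (.rel _ _ h),
          fun hv => .trans _ _ _ hv (.symm _ _ (.rel _ _ h))⟩
      exact propext ⟨fun _ => .refl _, fun _ => .refl _⟩
    -- a path can leave the left side only through the new edge, where `φ` holds
    have hA : ∀ u v, T u v → (φ u ∨ u.isLeft) = (φ v ∨ v.isLeft) := by
      rintro _ _ ((⟨h⟩ | ⟨h⟩) | ⟨rfl, rfl⟩)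
      · simp
      · simp [hφ _ _ (.inl (.inr h))]
      · simp [φ, EqvGen.refl]
    have hy : φ (.inr y) := by simpa using eq_of_eqvGen hA h
    exact ⟨(eq_of_eqvGen hφ h).mpr hy, hy⟩
  · have hl : EqvGen T (.inl x₀) (.inl x) :=
      eqvGen_map (f := Sum.inl) (fun _ _ h => .rel _ _ (Or.inl (Sum.LiftRel.inl h))) hx
    have hr : EqvGen T (.inr y₀) (.inr y) :=
      eqvGen_map (f := Sum.inr) (fun _ _ h => .rel _ _ (Or.inl (Sum.LiftRel.inr h))) hy
    exact .trans _ _ _ (.symm _ _ hl) (.trans _ _ _ (.rel _ _ (Or.inr ⟨rfl, rfl⟩)) hr)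

theorem orbitCount_map_of_surjective {R T : α → α → Prop} {g : α → β}
    (hg : Function.Surjective g) (hRT : ∀ x y, R x y → T x y)
    (hT : ∀ x y, T x y → R x y ∨ g x = g y) (hker : ∀ x y, g x = g y → EqvGen T x y) :
    orbitCount (Relation.Map R g g) = orbitCount T := by
  have hsec : ∀ x, EqvGen T (Function.surjInv hg (g x)) x :=
    fun x => hker _ _ (Function.surjInv_eq hg _)
  refine (orbitCount_eq_of_maps g (Function.surjInv hg) ?_ ?_ hsec ?_).symm
  · intro x y hxy
    rcases hT x y hxy with h | h
    · exact .rel _ _ ⟨x, y, h, rfl, rfl⟩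
    · exact h ▸ .refl _
  · rintro _ _ ⟨x, y, h, rfl, rfl⟩
    exact .trans _ _ _ (hsec x) (.trans _ _ _ (.rel _ _ (hRT _ _ h)) (.symm _ _ (hsec y)))
  · intro y
    rw [Function.surjInv_eq hg]
    exact .refl _

end OrbitCount

section OtherPt

variable {α β : Type} [Fintype α] [DecidableEq α] [Fintype β] [DecidableEq β] {n n' : ℕ}

theorem eq_otherPt_iff {c : α → Fin n} (hc : ∀ j, Fintype.card {p // c p = j} = 2) (p q : α) :
    q = otherPt c p ↔ c q = c p ∧ q ≠ p := by
  have hcard : (Finset.univ.filter fun q => c q = c p ∧ q ≠ p).card = 1 := by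
    rw [← Finset.filter_filter, Finset.filter_ne', Finset.card_erase_of_mem (by simp),
      ← Fintype.card_subtype, hc]
  obtain ⟨x, hx⟩ := Finset.card_eq_one.mp hcard
  have hmem : ∀ q, (c q = c p ∧ q ≠ p) ↔ q = x := fun q => by
    simpa using Finset.ext_iff.mp hx q
  have hne : (Finset.univ.filter fun q => c q = c p ∧ q ≠ p).Nonempty := by
    rw [hx]
    exact Finset.singleton_nonempty x
  have hx' : otherPt c p = x := by
    rw [otherPt, dif_pos hne]
    exact (hmem _).mp (Finset.mem_filter.mp hne.choose_spec).2
  rw [hx', hmem]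

theorem otherPt_eq_of_injective {c : α → Fin n} {c' : β → Fin n'}
    (hc : ∀ j, Fintype.card {p // c p = j} = 2) (hc' : ∀ j, Fintype.card {p // c' p = j} = 2)
    {ι : α → β} (hι : Function.Injective ι) {κ : Fin n → Fin n'}
    (h : ∀ p, c' (ι p) = κ (c p)) (p : α) :
    otherPt c' (ι p) = ι (otherPt c p) := by
  obtain ⟨hcp, hne⟩ := (eq_otherPt_iff hc p _).mp rfl
  exact ((eq_otherPt_iff hc' _ _).mpr ⟨by rw [h, h, hcp], hι.ne hne⟩).symm

end OtherPt

def DLD.strandRel {n m₁ m₂ : ℕ} (G : DLD n m₁ m₂) :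
    Fin (m₁ + 1) ⊕ Fin (m₂ + 1) → Fin (m₁ + 1) ⊕ Fin (m₂ + 1) → Prop :=
  fun s t => ∃ p, s = segBefore p ∧ t = segAfter (otherPt G.c p)

theorem betaDLD_eq_orbitCount {n m₁ m₂ : ℕ} (G : DLD n m₁ m₂) :
    betaDLD G = orbitCount G.strandRel :=
  rfl

section Concat

variable {n n' a₁ a₂ b₁ b₂ : ℕ}

def glueLine (a b : ℕ) : Fin (a + 1) ⊕ Fin (b + 1) → Fin (a + b + 1) :=
  Sum.elim (Fin.castLE (by omega)) fun i => ⟨a + i, by omega⟩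

theorem glueLine_surjective (a b : ℕ) : Function.Surjective (glueLine a b) := by
  intro j
  by_cases hj : j.1 ≤ a
  · exact ⟨.inl ⟨j, by omega⟩, rfl⟩
  · exact ⟨.inr ⟨j - a, by omega⟩, Fin.ext (show a + (j.1 - a) = j.1 by omega)⟩

theorem glueLine_eq_glueLine {a b : ℕ} {u v : Fin (a + 1) ⊕ Fin (b + 1)}
    (h : glueLine a b u = glueLine a b v) :
    u = v ∨ (u = .inl (Fin.last a) ∧ v = .inr 0) ∨ (u = .inr 0 ∧ v = .inl (Fin.last a)) := by
  rcases u with i | i <;> rcases v with j | j <;>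
    simp only [glueLine, Sum.elim_inl, Sum.elim_inr, Fin.ext_iff, Fin.val_castLE] at h <;>
    simp only [Sum.inl.injEq, Sum.inr.injEq, reduceCtorEq, Fin.ext_iff, Fin.val_last,
      Fin.val_zero, false_and, and_false, or_false, false_or] <;>
    omega

def glueSeg (a₁ a₂ b₁ b₂ : ℕ) :
    (Fin (a₁ + 1) ⊕ Fin (a₂ + 1)) ⊕ (Fin (b₁ + 1) ⊕ Fin (b₂ + 1)) →
      Fin (a₁ + b₁ + 1) ⊕ Fin (a₂ + b₂ + 1) :=
  Sum.map (glueLine a₁ b₁) (glueLine a₂ b₂) ∘ Equiv.sumSumSumComm _ _ _ _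

theorem glueSeg_surjective : Function.Surjective (glueSeg a₁ a₂ b₁ b₂) :=
  (Sum.map_surjective.mpr ⟨glueLine_surjective _ _, glueLine_surjective _ _⟩).comp
    (Equiv.surjective _)

def gluePt (a₁ a₂ b₁ b₂ : ℕ) :
    (Fin a₁ ⊕ Fin a₂) ⊕ (Fin b₁ ⊕ Fin b₂) ≃ Fin (a₁ + b₁) ⊕ Fin (a₂ + b₂) :=
  (Equiv.sumSumSumComm _ _ _ _).trans (Equiv.sumCongr finSumFinEquiv finSumFinEquiv)

theorem segBefore_gluePt (q : (Fin a₁ ⊕ Fin a₂) ⊕ (Fin b₁ ⊕ Fin b₂)) :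
    segBefore (gluePt a₁ a₂ b₁ b₂ q) = glueSeg a₁ a₂ b₁ b₂ (Sum.map segBefore segBefore q) := by
  rcases q with (i | i) | (i | i) <;> rfl

theorem segAfter_gluePt (q : (Fin a₁ ⊕ Fin a₂) ⊕ (Fin b₁ ⊕ Fin b₂)) :
    segAfter (gluePt a₁ a₂ b₁ b₂ q) = glueSeg a₁ a₂ b₁ b₂ (Sum.map segAfter segAfter q) := by
  rcases q with (i | i) | (i | i) <;> rfl

/-- The two extra edges are the identifications made by `glueSeg`. -/
def concatRel (X : DLD n a₁ a₂) (Y : DLD n' b₁ b₂) :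
    (Fin (a₁ + 1) ⊕ Fin (a₂ + 1)) ⊕ (Fin (b₁ + 1) ⊕ Fin (b₂ + 1)) →
      (Fin (a₁ + 1) ⊕ Fin (a₂ + 1)) ⊕ (Fin (b₁ + 1) ⊕ Fin (b₂ + 1)) → Prop :=
  addEdge (addEdge (Sum.LiftRel X.strandRel Y.strandRel)
    (.inl (.inl (Fin.last a₁))) (.inr (.inl 0))) (.inl (.inr (Fin.last a₂))) (.inr (.inr 0))

theorem eqvGen_concatRel_of_glueSeg_eq (X : DLD n a₁ a₂) (Y : DLD n' b₁ b₂)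
    {x y : (Fin (a₁ + 1) ⊕ Fin (a₂ + 1)) ⊕ (Fin (b₁ + 1) ⊕ Fin (b₂ + 1))}
    (h : glueSeg a₁ a₂ b₁ b₂ x = glueSeg a₁ a₂ b₁ b₂ y) : EqvGen (concatRel X Y) x y := by
  obtain ⟨x, rfl⟩ := (Equiv.sumSumSumComm _ _ _ _).symm.surjective x
  obtain ⟨y, rfl⟩ := (Equiv.sumSumSumComm _ _ _ _).symm.surjective y
  simp only [glueSeg, Function.comp_apply, Equiv.apply_symm_apply] at h
  rcases x with u | u <;> rcases y with v | v <;>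
    simp only [Sum.map_inl, Sum.map_inr, Sum.inl.injEq, Sum.inr.injEq, reduceCtorEq] at h <;>
    rcases glueLine_eq_glueLine h with rfl | ⟨rfl, rfl⟩ | ⟨rfl, rfl⟩
  all_goals first
    | exact .refl _
    | exact .rel _ _ (.inl (.inr ⟨rfl, rfl⟩))
    | exact .symm _ _ (.rel _ _ (.inl (.inr ⟨rfl, rfl⟩)))
    | exact .rel _ _ (.inr ⟨rfl, rfl⟩)
    | exact .symm _ _ (.rel _ _ (.inr ⟨rfl, rfl⟩))

theorem strandRel_eq_map_of_isConcatDLD {X : DLD n a₁ a₂} {Y : DLD n' b₁ b₂}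
    {G : DLD (n + n') (a₁ + b₁) (a₂ + b₂)} (hG : IsConcatDLD X Y G) :
    G.strandRel = Relation.Map (Sum.LiftRel X.strandRel Y.strandRel)
      (glueSeg a₁ a₂ b₁ b₂) (glueSeg a₁ a₂ b₁ b₂) := by
  obtain ⟨hX₁, hY₁, hX₂, hY₂⟩ := hG
  have hX : ∀ p, otherPt G.c (gluePt a₁ a₂ b₁ b₂ (.inl p)) =
      gluePt a₁ a₂ b₁ b₂ (.inl (otherPt X.c p)) :=
    otherPt_eq_of_injective X.two G.two ((gluePt _ _ _ _).injective.comp Sum.inl_injective)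
      (κ := Fin.castAdd n') (by rintro (i | i); exacts [hX₁ i, hX₂ i])
  have hY : ∀ p, otherPt G.c (gluePt a₁ a₂ b₁ b₂ (.inr p)) =
      gluePt a₁ a₂ b₁ b₂ (.inr (otherPt Y.c p)) :=
    otherPt_eq_of_injective Y.two G.two ((gluePt _ _ _ _).injective.comp Sum.inr_injective)
      (κ := Fin.natAdd n) (by rintro (i | i); exacts [hY₁ i, hY₂ i])
  ext s t
  constructor
  · rintro ⟨p, rfl, rfl⟩
    obtain ⟨p | p, rfl⟩ := (gluePt a₁ a₂ b₁ b₂).surjective p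
    · exact ⟨_, _, .inl ⟨p, rfl, rfl⟩, (segBefore_gluePt (.inl p)).symm,
        by rw [hX, segAfter_gluePt]; rfl⟩
    · exact ⟨_, _, .inr ⟨p, rfl, rfl⟩, (segBefore_gluePt (.inr p)).symm,
        by rw [hY, segAfter_gluePt]; rfl⟩
  · rintro ⟨_, _, ⟨⟨p, rfl, rfl⟩⟩ | ⟨⟨p, rfl, rfl⟩⟩, rfl, rfl⟩
    · exact ⟨gluePt a₁ a₂ b₁ b₂ (.inl p), (segBefore_gluePt (.inl p)).symm,
        by rw [hX, segAfter_gluePt]; rfl⟩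
    · exact ⟨gluePt a₁ a₂ b₁ b₂ (.inr p), (segBefore_gluePt (.inr p)).symm,
        by rw [hY, segAfter_gluePt]; rfl⟩

theorem betaDLD_eq_orbitCount_concatRel {X : DLD n a₁ a₂} {Y : DLD n' b₁ b₂}
    {G : DLD (n + n') (a₁ + b₁) (a₂ + b₂)} (hG : IsConcatDLD X Y G) :
    betaDLD G = orbitCount (concatRel X Y) := by
  rw [betaDLD_eq_orbitCount, strandRel_eq_map_of_isConcatDLD hG]
  refine orbitCount_map_of_surjective glueSeg_surjective (fun _ _ h => .inl (.inl h)) ?_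
    (fun _ _ => eqvGen_concatRel_of_glueSeg_eq X Y)
  rintro _ _ ((h | ⟨rfl, rfl⟩) | ⟨rfl, rfl⟩)
  exacts [.inl h, .inr rfl, .inr rfl]

open Classical in
/-- The constant `c`: the second gluing closes up a component, instead of merging two, exactly
when the ends of the two lines of `X` lie on one strand and so do the starts of those of `Y`. -/
noncomputable def concatDefect (X : DLD n a₁ a₂) (Y : DLD n' b₁ b₂) : ℕ :=
  if EqvGen X.strandRel (.inl (Fin.last a₁)) (.inr (Fin.last a₂)) ∧
      EqvGen Y.strandRel (.inl 0) (.inr 0) then 1 else 2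

theorem orbitCount_concatRel_add_concatDefect (X : DLD n a₁ a₂) (Y : DLD n' b₁ b₂) :
    orbitCount (concatRel X Y) + concatDefect X Y = betaDLD X + betaDLD Y := by
  have hsides : orbitCount (Sum.LiftRel X.strandRel Y.strandRel) = betaDLD X + betaDLD Y :=
    orbitCount_sumLiftRel _ _
  have hfirst := orbitCount_addEdge_add_one
    (not_eqvGen_sumLiftRel_inl_inr (r := X.strandRel) (s := Y.strandRel) (.inl (Fin.last a₁))
      (.inl 0))
  have hsecond := eqvGen_addEdge_inl_inr_iff (r := X.strandRel) (s := Y.strandRel)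
    (x₀ := .inl (Fin.last a₁)) (x := .inr (Fin.last a₂)) (y₀ := .inl 0) (y := .inr 0)
  unfold concatDefect concatRel
  split_ifs with h
  · rw [orbitCount_addEdge_of_eqvGen (hsecond.mpr h)]
    omega
  · have := orbitCount_addEdge_add_one (mt hsecond.mp h)
    omega

end Concat

/-- For double linear diagrams `X`, `Y` with marked (ordered)
lines, the marked connected sum satisfies
`β_{X # Y} = β_X + β_Y − c` with `c ∈ {1, 2}` depending only on `X` and `Y` and
not on the choice of gluing. -/
theorem betaDLD_concat (n n' a₁ a₂ b₁ b₂ : ℕ) (X : DLD n a₁ a₂) (Y : DLD n' b₁ b₂) :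
    ∃ c : ℕ, (c = 1 ∨ c = 2) ∧
      ∀ G : DLD (n + n') (a₁ + b₁) (a₂ + b₂),
        IsConcatDLD X Y G → betaDLD G + c = betaDLD X + betaDLD Y := by
  refine ⟨concatDefect X Y, ?_, fun G hG => ?_⟩
  · unfold concatDefect
    split_ifs <;> simp
  · rw [betaDLD_eq_orbitCount_concatRel hG]
    exact orbitCount_concatRel_add_concatDefect X Y
end

section
/- β of a double chord diagram is invariant under simultaneously reversing the orientations of both core circles, and under the isomorphism exchanging the two core circles. -/
open FreeAbelianGroup

/-! `β` counts the orbits of `s ∘ o`, where `o` is the involution exchanging the ends of each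
chord and `s` advances every point along its circle. Relabelling the points by a bijection `e`
replaces `o` by its conjugate under `e`, and the number of orbits of a permutation is invariant
under conjugation and inversion. Exchanging the circles therefore conjugates `s ∘ o` as a whole.
Reversing both circles conjugates `s` to `s⁻¹`, so it turns `s ∘ o` into a conjugate of
`s⁻¹ ∘ o = (o ∘ s)⁻¹`, and `o ∘ s` is conjugate to `s ∘ o`. -/

open Relation

section OrbitCount

variable {α β : Type}

lemma orbitCount_eq_card_quot (r : α → α → Prop) : orbitCount r = Nat.card (Quot r) :=
  Nat.card_congr
    { toFun := Quot.lift (Quot.mk r) fun _ _ => Quot.eqvGen_sound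
      invFun := Quot.lift (Quot.mk _) fun a b h => Quot.sound (EqvGen.rel a b h)
      left_inv := fun x => Quot.inductionOn x fun _ => rfl
      right_inv := fun x => Quot.inductionOn x fun _ => rfl }

lemma orbitCount_comap_equiv (e : α ≃ β) (r : β → β → Prop) :
    orbitCount (fun a b => r (e a) (e b)) = orbitCount r := by
  rw [orbitCount_eq_card_quot, orbitCount_eq_card_quot]
  exact Nat.card_congr (Quot.congr e fun _ _ => Iff.rfl)

lemma orbitCount_flip (r : α → α → Prop) : orbitCount (flip r) = orbitCount r := by
  have h : EqvGen (flip r) = EqvGen r :=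
    le_antisymm (EqvGen.eqvGen_le fun a b h => (EqvGen.rel b a h).symm)
      (EqvGen.eqvGen_le fun a b h => (EqvGen.rel (r := flip r) b a h).symm)
  show Nat.card (Quot (EqvGen (flip r))) = Nat.card (Quot (EqvGen r))
  rw [h]

noncomputable def numOrbits (σ : Equiv.Perm α) : ℕ :=
  orbitCount fun p q => σ p = q

lemma numOrbits_permCongr (e : α ≃ β) (σ : Equiv.Perm α) :
    numOrbits (e.permCongr σ) = numOrbits σ := by
  rw [numOrbits, ← orbitCount_comap_equiv e]
  simp [numOrbits]

lemma numOrbits_inv (σ : Equiv.Perm α) : numOrbits σ⁻¹ = numOrbits σ := by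
  rw [numOrbits, numOrbits, ← orbitCount_flip]
  congr
  funext p q
  exact propext (Equiv.Perm.inv_eq_iff_eq.trans eq_comm)

lemma numOrbits_mul_comm (σ τ : Equiv.Perm α) : numOrbits (σ * τ) = numOrbits (τ * σ) := by
  rw [← numOrbits_permCongr τ, Equiv.permCongr_eq_mul, mul_assoc, mul_inv_cancel_right]

end OrbitCount

section ChordInvolution

variable {α β : Type} [Fintype α] [DecidableEq α] [Fintype β] [DecidableEq β] {n : ℕ}

omit [DecidableEq α] in
lemma existsUnique_other {c : α → Fin n} (htwo : ∀ j, Fintype.card {p // c p = j} = 2)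
    (p : α) : ∃! q, c q = c p ∧ q ≠ p := by
  obtain ⟨⟨q, hq⟩, hne, huniq⟩ :=
    (Nat.card_eq_two_iff' (⟨p, rfl⟩ : {q // c q = c p})).1 (by simpa using htwo (c p))
  refine ⟨q, ⟨hq, fun h => hne (Subtype.ext h)⟩, fun q' ⟨hq', hne'⟩ => ?_⟩
  exact congrArg Subtype.val (huniq ⟨q', hq'⟩ fun h => hne' (congrArg Subtype.val h))

lemma otherPt_eq_iff {c : α → Fin n} (htwo : ∀ j, Fintype.card {p // c p = j} = 2)
    {p q : α} : otherPt c p = q ↔ c q = c p ∧ q ≠ p := by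
  obtain ⟨q₀, hq₀, huniq⟩ := existsUnique_other htwo p
  have hne : (Finset.univ.filter fun q => c q = c p ∧ q ≠ p).Nonempty := ⟨q₀, by simpa using hq₀⟩
  have hspec : c hne.choose = c p ∧ hne.choose ≠ p := by simpa using hne.choose_spec
  rw [otherPt, dif_pos hne, huniq _ hspec]
  exact ⟨fun h => h ▸ hq₀, fun h => (huniq q h).symm⟩

lemma otherPt_involutive {c : α → Fin n} (htwo : ∀ j, Fintype.card {p // c p = j} = 2) :
    Function.Involutive (otherPt c) := fun p => by
  obtain ⟨hc, hne⟩ := (otherPt_eq_iff htwo).1 rfl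
  exact (otherPt_eq_iff htwo).2 ⟨hc.symm, hne.symm⟩

noncomputable def chordPerm (c : α → Fin n) (htwo : ∀ j, Fintype.card {p // c p = j} = 2) :
    Equiv.Perm α :=
  (otherPt_involutive htwo).toPerm

lemma chordPerm_inv {c : α → Fin n} (htwo : ∀ j, Fintype.card {p // c p = j} = 2) :
    (chordPerm c htwo)⁻¹ = chordPerm c htwo :=
  Function.Involutive.toPerm_symm _

lemma chordPerm_comp {c : α → Fin n} (htwo : ∀ j, Fintype.card {p // c p = j} = 2) (e : β ≃ α)
    (htwo' : ∀ j, Fintype.card {p // (c ∘ e) p = j} = 2) :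
    chordPerm (c ∘ e) htwo' = e.symm.permCongr (chordPerm c htwo) := by
  ext p
  obtain ⟨hc, hne⟩ := (otherPt_eq_iff htwo (p := e p)).1 rfl
  refine (otherPt_eq_iff htwo').2 ⟨?_, ?_⟩
  · simpa [chordPerm] using hc
  · simpa [chordPerm, Equiv.symm_apply_eq] using hne

end ChordInvolution

lemma cyc_eq_finRotate {m : ℕ} : (cyc : Fin m → Fin m) = finRotate m := by
  funext i
  obtain ⟨k, rfl⟩ : ∃ k, m = k + 1 := Nat.exists_eq_succ_of_ne_zero i.pos.ne'
  ext
  rw [coe_finRotate]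
  split_ifs with h
  · simp [cyc, h]
  · simp only [cyc]
    have : i.1 ≠ k := fun h' => h (Fin.ext h')
    exact Nat.mod_eq_of_lt (by omega)

lemma revPerm_mul_finRotate_mul_revPerm {m : ℕ} :
    Fin.revPerm * finRotate m * Fin.revPerm⁻¹ = (finRotate m)⁻¹ := by
  refine eq_inv_of_mul_eq_one_left (Equiv.ext fun i => ?_)
  obtain ⟨k, rfl⟩ : ∃ k, m = k + 1 := Nat.exists_eq_succ_of_ne_zero i.pos.ne'
  ext
  simp only [Equiv.Perm.mul_apply, Equiv.Perm.inv_def, Fin.revPerm_symm, Fin.revPerm_apply,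
    Equiv.Perm.one_apply, Fin.val_rev, coe_finRotate, Fin.ext_iff, Fin.val_last]
  split_ifs <;> omega

def cycPerm (m₁ m₂ : ℕ) : Equiv.Perm (Fin m₁ ⊕ Fin m₂) :=
  Equiv.sumCongr (finRotate m₁) (finRotate m₂)

lemma cycPerm_apply {m₁ m₂ : ℕ} (p : Fin m₁ ⊕ Fin m₂) : cycPerm m₁ m₂ p = cycS p := by
  rcases p with p | p <;> simp [cycPerm, cycS, cyc_eq_finRotate]

lemma betaDCD_eq_numOrbits {n m₁ m₂ : ℕ} (G : DCD n m₁ m₂) :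
    betaDCD G = numOrbits (cycPerm m₁ m₂ * chordPerm G.c G.two) +
      (if m₁ = 0 then 1 else 0) + (if m₂ = 0 then 1 else 0) := by
  simp [betaDCD, numOrbits, chordPerm, cycPerm_apply]

lemma betaDCD_revBoth {n m₁ m₂ : ℕ} (G : DCD n m₁ m₂) : betaDCD (revBoth G) = betaDCD G := by
  set R : Equiv.Perm (Fin m₁ ⊕ Fin m₂) := Equiv.sumCongr Fin.revPerm Fin.revPerm
  set S := cycPerm m₁ m₂
  set O := chordPerm G.c G.two
  have hO : chordPerm (revBoth G).c (revBoth G).two = R⁻¹ * O * R :=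
    (chordPerm_comp G.two R _).trans (Equiv.permCongr_eq_mul _ _)
  have hRS : R * S * R⁻¹ = S⁻¹ := by
    simp only [R, S, cycPerm, Equiv.Perm.sumCongr_inv, Equiv.Perm.sumCongr_mul,
      revPerm_mul_finRotate_mul_revPerm]
  have key : numOrbits (S * (R⁻¹ * O * R)) = numOrbits (S * O) := by
    calc numOrbits (S * (R⁻¹ * O * R))
        = numOrbits (R * S * R⁻¹ * O) := by
          rw [show S * (R⁻¹ * O * R) = S * R⁻¹ * O * R by simp only [mul_assoc],
            numOrbits_mul_comm]
          simp only [mul_assoc]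
      _ = numOrbits (S⁻¹ * O)⁻¹ := by rw [hRS, numOrbits_inv]
      _ = numOrbits (S * O) := by
        rw [mul_inv_rev, inv_inv, chordPerm_inv, numOrbits_mul_comm]
  rw [betaDCD_eq_numOrbits, betaDCD_eq_numOrbits, hO, key]

lemma betaDCD_swapCirc {n m₁ m₂ : ℕ} (G : DCD n m₁ m₂) : betaDCD (swapCirc G) = betaDCD G := by
  set W := Equiv.sumComm (Fin m₂) (Fin m₁)
  have hO : chordPerm (swapCirc G).c (swapCirc G).two = W.symm.permCongr (chordPerm G.c G.two) :=
    chordPerm_comp G.two W _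
  have hS : cycPerm m₂ m₁ = W.symm.permCongr (cycPerm m₁ m₂) := by
    ext (p | p) <;> rfl
  rw [betaDCD_eq_numOrbits, betaDCD_eq_numOrbits, hO, hS, ← Equiv.permCongr_mul,
    numOrbits_permCongr, add_right_comm]

/-- `β` of a double chord diagram is invariant under
simultaneously reversing the orientations of both core circles, and under the
isomorphism exchanging the two core circles. -/
theorem betaDCD_revBoth_and_swapCirc {n m₁ m₂ : ℕ} (G : DCD n m₁ m₂) :
    betaDCD (revBoth G) = betaDCD G ∧ betaDCD (swapCirc G) = betaDCD G :=
  ⟨betaDCD_revBoth G, betaDCD_swapCirc G⟩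
end
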